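/- arXiv:1510.07865 — 5 statements merged into one kernel-verified Lean document; each statement's English description precedes it below -/
import Mathlib

section
/- Let a > 0, b > 0 and 0 < α ≤ 1. The function g(u,h) = (1 − α·u)·exp(−(a·u + b·h)) + α·b·(u² + h²) is convex on the square [0,1] × [0,1]. Consequently, for nonnegative weights q_1,…,q_N, the function G(P) = Σ_{i=1}^N q_i·[ (1 − α·p_i^{UE})·exp(−(a·p_i^{UE} + b·p_i^{H})) + α·b·((p_i^{UE})² + (p_i^{H})²) ] is convex on [0,1]^{2N}. (Second half of Proposition 1, with a = πα λ_UE R_UE² and b = π λ_H R_H².) -/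
/-!
Convexity of `g` is checked along segments. Along a segment in direction `d`, `g` is an affine
function times the exponential of an affine function, plus a quadratic; its second derivative is
`E ((1 - α u) c² + 2 α d₁ c) + 2 α b (d₁² + d₂²)` with `E = exp (-(a u + b h)) ∈ (0, 1]` and
`c = a d₁ + b d₂`. Expanded, its only possibly negative term is `2 α b E d₁ d₂`, and since
`E ≤ 1` the regularizer absorbs it. `G` is a nonnegative combination of `g` composed with
coordinate projections.
-/

open Real Set

section Convexity

variable {𝕜 E β ι : Type*}

theorem ConvexOn.finset_sum [Semiring 𝕜] [PartialOrder 𝕜] [AddCommMonoid E] [AddCommMonoid β]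
    [PartialOrder β] [IsOrderedAddMonoid β] [SMul 𝕜 E] [Module 𝕜 β] {s : Set E}
    {f : ι → E → β} (t : Finset ι) (hs : Convex 𝕜 s) (hf : ∀ i ∈ t, ConvexOn 𝕜 s (f i)) :
    ConvexOn 𝕜 s (fun x => ∑ i ∈ t, f i x) := by
  classical
  induction t using Finset.induction_on with
  | empty => simpa using convexOn_const (0 : β) hs
  | insert j t hj ih =>
    simp_rw [Finset.sum_insert hj]
    exact (hf j (t.mem_insert_self j)).add (ih fun i hi => hf i (Finset.mem_insert_of_mem hi))

theorem convexOn_of_convexOn_comp_lineMap [Ring 𝕜] [PartialOrder 𝕜] [IsOrderedRing 𝕜]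
    [AddCommGroup E] [Module 𝕜 E] [AddCommMonoid β] [PartialOrder β] [SMul 𝕜 β]
    {s : Set E} {f : E → β} (hs : Convex 𝕜 s)
    (h : ∀ x ∈ s, ∀ y ∈ s, ConvexOn 𝕜 (Icc (0 : 𝕜) 1) (f ∘ AffineMap.lineMap x y)) :
    ConvexOn 𝕜 s f := by
  refine ⟨hs, fun x hx y hy a b ha hb hab => ?_⟩
  have := (h x hx y hy).2 (left_mem_Icc.2 zero_le_one) (right_mem_Icc.2 zero_le_one) ha hb hab
  rw [eq_sub_of_add_eq hab] at this ⊢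
  simpa [AffineMap.lineMap_apply_module] using this

end Convexity

theorem hasDerivAt_affine_mul_exp_neg_affine (A B K c t : ℝ) :
    HasDerivAt (fun t => (A + B * t) * exp (-(K + c * t)))
      ((B - c * A + -(c * B) * t) * exp (-(K + c * t))) t := by
  have hlin : ∀ p q : ℝ, HasDerivAt (fun t => p + q * t) q t := fun p q => by
    simpa using ((hasDerivAt_id t).const_mul q).const_add p
  exact ((hlin A B).mul (hlin K c).neg.exp).congr_deriv (by simp only [Pi.neg_apply]; ring)

theorem hasDerivAt_quadratic (Q L M t : ℝ) :
    HasDerivAt (fun t => Q * t ^ 2 + L * t + M) (2 * Q * t + L) t := by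
  have := (((hasDerivAt_pow 2 t).const_mul Q).add ((hasDerivAt_id t).const_mul L)).add_const M
  exact this.congr_deriv (by norm_num; ring)

theorem convexOn_affine_mul_exp_neg_affine_add_quadratic {D : Set ℝ} (hD : Convex ℝ D)
    (A B K c Q L M : ℝ)
    (h : ∀ t ∈ interior D, 0 ≤ c * (c * (A + B * t) - 2 * B) * exp (-(K + c * t)) + 2 * Q) :
    ConvexOn ℝ D (fun t => (A + B * t) * exp (-(K + c * t)) + (Q * t ^ 2 + L * t + M)) := by
  refine convexOn_of_hasDerivWithinAt2_nonneg hD (by fun_prop)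
    (f' := fun t => (B - c * A + -(c * B) * t) * exp (-(K + c * t)) + (2 * Q * t + L))
    (fun t _ => ((hasDerivAt_affine_mul_exp_neg_affine A B K c t).add
      (hasDerivAt_quadratic Q L M t)).hasDerivWithinAt)
    (fun t _ => ((hasDerivAt_affine_mul_exp_neg_affine _ _ K c t).add
      ((hasDerivAt_id t).const_mul (2 * Q) |>.add_const L)).hasDerivWithinAt) ?_
  intro t ht
  convert h t ht using 1
  ring

/-- The function `g` of the statement; its first term is the miss probability `1 - P_off`. -/
noncomputable def regularizedMissProb (a b α : ℝ) (p : ℝ × ℝ) : ℝ :=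
  (1 - α * p.1) * exp (-(a * p.1 + b * p.2)) + α * b * (p.1 ^ 2 + p.2 ^ 2)

theorem hessianForm_nonneg {a b α w E d₁ d₂ : ℝ} (ha : 0 ≤ a) (hb : 0 ≤ b) (hα : 0 ≤ α)
    (hw : 0 ≤ w) (hE₀ : 0 ≤ E) (hE₁ : E ≤ 1) :
    0 ≤ E * (w * (a * d₁ + b * d₂) ^ 2 + 2 * α * d₁ * (a * d₁ + b * d₂))
      + 2 * α * b * (d₁ ^ 2 + d₂ ^ 2) := by
  have hcross : 0 ≤ d₁ ^ 2 + d₂ ^ 2 + 2 * E * d₁ * d₂ := by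
    nlinarith [mul_nonneg (sub_nonneg.2 hE₁) (add_nonneg (sq_nonneg d₁) (sq_nonneg d₂)),
      mul_nonneg hE₀ (sq_nonneg (d₁ + d₂))]
  nlinarith [mul_nonneg hE₀ (mul_nonneg hw (sq_nonneg (a * d₁ + b * d₂))),
    mul_nonneg hE₀ (mul_nonneg (mul_nonneg hα ha) (sq_nonneg d₁)),
    mul_nonneg (mul_nonneg hα hb) hcross,
    mul_nonneg (mul_nonneg hα hb) (add_nonneg (sq_nonneg d₁) (sq_nonneg d₂))]

theorem convexOn_regularizedMissProb_comp_lineMap {a b α : ℝ} (ha : 0 ≤ a) (hb : 0 ≤ b)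
    (hα : 0 ≤ α) (hα1 : α ≤ 1) {x y : ℝ × ℝ}
    (hx : x ∈ Icc (0 : ℝ) 1 ×ˢ Icc (0 : ℝ) 1) (hy : y ∈ Icc (0 : ℝ) 1 ×ˢ Icc (0 : ℝ) 1) :
    ConvexOn ℝ (Icc (0 : ℝ) 1) (regularizedMissProb a b α ∘ AffineMap.lineMap x y) := by
  set d₁ := y.1 - x.1
  set d₂ := y.2 - x.2
  have hline : ∀ t : ℝ, AffineMap.lineMap x y t = (x.1 + d₁ * t, x.2 + d₂ * t) := fun t => by
    ext <;> simp only [AffineMap.lineMap_apply_module', Prod.fst_add, Prod.snd_add, Prod.smul_fst,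
      Prod.smul_snd, Prod.fst_sub, Prod.snd_sub, smul_eq_mul] <;> ring
  have hfun : regularizedMissProb a b α ∘ AffineMap.lineMap x y = fun t =>
      (1 - α * x.1 + -(α * d₁) * t) * exp (-(a * x.1 + b * x.2 + (a * d₁ + b * d₂) * t)) +
        (α * b * (d₁ ^ 2 + d₂ ^ 2) * t ^ 2 + 2 * α * b * (x.1 * d₁ + x.2 * d₂) * t
          + α * b * (x.1 ^ 2 + x.2 ^ 2)) := by
    funext t
    simp only [Function.comp_apply, hline, regularizedMissProb]
    rw [show a * (x.1 + d₁ * t) + b * (x.2 + d₂ * t) = a * x.1 + b * x.2 + (a * d₁ + b * d₂) * t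
      by ring]
    ring
  rw [hfun]
  refine convexOn_affine_mul_exp_neg_affine_add_quadratic (convex_Icc 0 1) _ _ _ _ _ _ _
    fun t ht => ?_
  have hz := ((convex_Icc (0 : ℝ) 1).prod (convex_Icc 0 1)).lineMap_mem hx hy (interior_subset ht)
  rw [hline] at hz
  obtain ⟨⟨hu₀, hu₁⟩, hh₀, -⟩ := hz
  have hexp_le_one : exp (-(a * x.1 + b * x.2 + (a * d₁ + b * d₂) * t)) ≤ 1 :=
    exp_le_one_iff.2 (by nlinarith)
  convert hessianForm_nonneg ha hb hα (d₁ := d₁) (d₂ := d₂) (w := 1 - α * (x.1 + d₁ * t))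
    (by nlinarith) (exp_pos _).le hexp_le_one using 1
  ring

theorem convexOn_regularizedMissProb {a b α : ℝ} (ha : 0 ≤ a) (hb : 0 ≤ b) (hα : 0 ≤ α)
    (hα1 : α ≤ 1) :
    ConvexOn ℝ (Icc (0 : ℝ) 1 ×ˢ Icc (0 : ℝ) 1) (regularizedMissProb a b α) :=
  convexOn_of_convexOn_comp_lineMap ((convex_Icc 0 1).prod (convex_Icc 0 1))
    fun _ hx _ hy => convexOn_regularizedMissProb_comp_lineMap ha hb hα hα1 hx hy

/-- Proposition 1, second half: with `a = πα λ_UE R_UE² > 0`, `b = π λ_H R_H² > 0`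
and `0 < α ≤ 1`, the function
`g(u,h) = (1 − α·u)·exp(−(a·u + b·h)) + α·b·(u² + h²)` is convex on `[0,1]²`,
and consequently `G(P) = Σ_i q_i · g(p_i^{UE}, p_i^{H})` is convex on `[0,1]^{2N}`
for nonnegative weights `q_i`. -/
theorem G_convex (a b α : ℝ) (ha : 0 < a) (hb : 0 < b) (hα : 0 < α) (hα1 : α ≤ 1) :
    ConvexOn ℝ (Set.Icc (0:ℝ) 1 ×ˢ Set.Icc (0:ℝ) 1)
      (fun p : ℝ × ℝ =>
        (1 - α * p.1) * Real.exp (-(a * p.1 + b * p.2)) + α * b * (p.1 ^ 2 + p.2 ^ 2)) ∧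
    ∀ (N : ℕ) (q : Fin N → ℝ), (∀ i, 0 ≤ q i) →
      ConvexOn ℝ {P : (Fin N → ℝ) × (Fin N → ℝ) |
          ∀ i, P.1 i ∈ Set.Icc (0:ℝ) 1 ∧ P.2 i ∈ Set.Icc (0:ℝ) 1}
        (fun P => ∑ i, q i *
          ((1 - α * P.1 i) * Real.exp (-(a * P.1 i + b * P.2 i)) +
            α * b * ((P.1 i) ^ 2 + (P.2 i) ^ 2))) := by
  have hg := convexOn_regularizedMissProb ha.le hb.le hα.le hα1
  refine ⟨hg, fun N q hq => ?_⟩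
  let coord (i : Fin N) : ((Fin N → ℝ) × (Fin N → ℝ)) →ₗ[ℝ] ℝ × ℝ :=
    (LinearMap.proj i).prodMap (LinearMap.proj i)
  have hS : {P : (Fin N → ℝ) × (Fin N → ℝ) | ∀ i, P.1 i ∈ Icc (0:ℝ) 1 ∧ P.2 i ∈ Icc (0:ℝ) 1} =
      ⋂ i, coord i ⁻¹' (Icc (0 : ℝ) 1 ×ˢ Icc (0 : ℝ) 1) := by
    ext P
    simp [coord, and_and_and_comm]
  rw [hS]
  have hconv := convex_iInter fun i => hg.1.linear_preimage (coord i)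
  exact ConvexOn.finset_sum _ hconv fun i _ =>
    ((hg.comp_linearMap (coord i)).subset (iInter_subset _ i) hconv).smul (hq i)
end

section
/- Let a > 0, b > 0 and 0 < α ≤ 1. The function f(u,h) = −(1 − (1 − α·u)·exp(−(a·u + b·h))) is NOT convex on [0,1] × [0,1]; equivalently, its Hessian matrix fails to be positive semidefinite at some point of (0,1)² (indeed the determinant of the Hessian equals −α²·b²·exp(−2(a·u + b·h)) < 0 at every point). Hence the objective F(P) = −Σ_i q_i P_{i,off} of the two-tier caching placement problem is non-convex. -/
/-!
On the line `u = t / α`, `h = 1 - (α + a) t / (α b)` through the corner `(0, 1)` one has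
`1 - α u = 1 - t` and `a u + b h = b - t`, so there `-P_off = e^{-b} (1 - t) e^t - 1`. As
`(1 - t) e^t` has derivative `-t e^t`, strictly decreasing for `t > 0`, this is strictly concave
on the piece of the line inside the square, so `-P_off` is not convex. On the diagonal
`p_i^{UE} = u`, `p_i^H = h` the objective `F` equals `(∑ q_i) · (-P_off(u, h))`, so convexity of
`F` would force that of `-P_off`.
-/

open Real Set

theorem StrictConcaveOn.not_convexOn {𝕜 E β : Type*} [Field 𝕜] [LinearOrder 𝕜]
    [IsStrictOrderedRing 𝕜] [AddCommMonoid E] [Module 𝕜 E]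
    [AddCommMonoid β] [PartialOrder β] [SMul 𝕜 β] {s : Set E} {f : E → β}
    (hf : StrictConcaveOn 𝕜 s f) {x y : E} (hx : x ∈ s) (hy : y ∈ s) (hxy : x ≠ y) :
    ¬ ConvexOn 𝕜 s f := fun hconv =>
  (hf.2 hx hy hxy (half_pos one_pos) (half_pos one_pos) (add_halves 1)).not_ge
    (hconv.2 hx hy (half_pos one_pos).le (half_pos one_pos).le (add_halves 1))

theorem strictConcaveOn_one_sub_mul_exp : StrictConcaveOn ℝ (Ici 0) fun x => (1 - x) * exp x := by
  have hderiv : ∀ x, deriv (fun x => (1 - x) * exp x) x = -(x * exp x) := fun x => by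
    have : HasDerivAt (fun x => (1 - x) * exp x) (-1 * exp x + (1 - x) * exp x) x :=
      ((hasDerivAt_id x).const_sub 1).mul (hasDerivAt_exp x)
    rw [this.deriv]; ring
  refine StrictAntiOn.strictConcaveOn_of_deriv (convex_Ici 0) (by fun_prop) ?_
  rw [interior_Ici]
  intro x hx y hy hxy
  simp only [hderiv, neg_lt_neg_iff]
  exact mul_lt_mul hxy (exp_le_exp.2 hxy.le) (exp_pos x) (hx.trans hxy).le

noncomputable def offloadingProb (α a b u h : ℝ) : ℝ := 1 - (1 - α * u) * exp (-(a * u + b * h))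

theorem not_convexOn_neg_offloadingProb {a b α : ℝ} (ha : 0 ≤ a) (hb : 0 < b) (hα : 0 < α) :
    ¬ ConvexOn ℝ (Icc 0 1 ×ˢ Icc 0 1) fun p : ℝ × ℝ => -offloadingProb α a b p.1 p.2 := by
  intro hconv
  set δ := α * b / (α + a + b)
  have hδ : 0 < δ := by positivity
  let L : ℝ →ᵃ[ℝ] ℝ × ℝ := AffineMap.lineMap (0, 1) (α⁻¹, 1 - (α + a) / (α * b))
  have hL : ∀ t, L t = (t / α, 1 - t * (α + a) / (α * b)) := fun t => by
    simp only [L, AffineMap.lineMap_apply_module', Prod.mk_sub_mk, Prod.smul_mk, Prod.mk_add_mk,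
      smul_eq_mul]
    ext <;> ring
  have hmaps : Icc 0 δ ⊆ L ⁻¹' (Icc 0 1 ×ˢ Icc 0 1) := by
    rintro t ⟨ht₀, htδ⟩
    have hbound : t * (α + a + b) ≤ α * b := (le_div_iff₀ (by positivity)).1 htδ
    simp only [mem_preimage, hL, mem_prod, mem_Icc]
    refine ⟨⟨by positivity, ?_⟩, ?_, ?_⟩
    · rw [div_le_one hα]; nlinarith
    · rw [sub_nonneg, div_le_one (by positivity)]; nlinarith
    · have : 0 ≤ t * (α + a) / (α * b) := by positivity
      linarith
  have hline : ∀ t, exp b * (1 - offloadingProb α a b (L t).1 (L t).2) = (1 - t) * exp t := by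
    intro t
    have hexponent : -(a * (t / α) + b * (1 - t * (α + a) / (α * b))) = t + -b := by
      field_simp; ring
    rw [hL, offloadingProb, hexponent, exp_add, exp_neg]
    field_simp
    ring
  have hconvL : ConvexOn ℝ (Icc 0 δ) fun t => (1 - t) * exp t :=
    (((hconv.comp_affineMap L).subset hmaps (convex_Icc 0 δ)).add_const 1).smul (exp_pos b).le
      |>.congr fun t _ => by
        simp only [smul_eq_mul, Pi.add_apply, Function.comp_apply, ← hline]
        ring
  exact (strictConcaveOn_one_sub_mul_exp.subset Icc_subset_Ici_self (convex_Icc 0 δ)).not_convexOn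
    (left_mem_Icc.2 hδ.le) (right_mem_Icc.2 hδ.le) hδ.ne hconvL

theorem ConvexOn.of_weighted_sum_diagonal {𝕜 E F ι : Type*} [Field 𝕜] [LinearOrder 𝕜]
    [IsStrictOrderedRing 𝕜] [AddCommGroup E] [Module 𝕜 E] [AddCommGroup F] [Module 𝕜 F]
    [Fintype ι] {s : Set (E × F)} {g : E × F → 𝕜} {q : ι → 𝕜} (hq : 0 < ∑ i, q i)
    (hconv : ConvexOn 𝕜 {P : (ι → E) × (ι → F) | ∀ i, (P.1 i, P.2 i) ∈ s}
      fun P => ∑ i, q i * g (P.1 i, P.2 i)) :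
    ConvexOn 𝕜 s g := by
  obtain ⟨i₀, -, -⟩ := Finset.exists_ne_zero_of_sum_ne_zero hq.ne'
  have : Nonempty ι := ⟨i₀⟩
  let diagonal : E × F →ₗ[𝕜] (ι → E) × (ι → F) :=
    (LinearMap.pi fun _ => LinearMap.fst 𝕜 E F).prod (LinearMap.pi fun _ => LinearMap.snd 𝕜 E F)
  have hpre : diagonal ⁻¹' {P | ∀ i, (P.1 i, P.2 i) ∈ s} = s := by
    ext p; simp [diagonal]
  have := (hconv.comp_linearMap diagonal).smul (inv_nonneg.2 hq.le)
  rw [hpre] at this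
  refine this.congr fun p _ => ?_
  simp [diagonal, ← Finset.sum_mul, hq.ne']

theorem objective_not_convex_general (a b α : ℝ) (ha : 0 < a) (hb : 0 < b) (hα : 0 < α) :
    ¬ ConvexOn ℝ (Set.Icc (0:ℝ) 1 ×ˢ Set.Icc (0:ℝ) 1)
      (fun p : ℝ × ℝ => -(1 - (1 - α * p.1) * Real.exp (-(a * p.1 + b * p.2)))) ∧
    ∀ (N : ℕ) (q : Fin N → ℝ), 0 < N → (∀ i, 0 < q i) →
      ¬ ConvexOn ℝ {P : (Fin N → ℝ) × (Fin N → ℝ) |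
          ∀ i, P.1 i ∈ Set.Icc (0:ℝ) 1 ∧ P.2 i ∈ Set.Icc (0:ℝ) 1}
        (fun P => -∑ i, q i *
          (1 - (1 - α * P.1 i) * Real.exp (-(a * P.1 i + b * P.2 i)))) := by
  refine ⟨not_convexOn_neg_offloadingProb ha.le hb hα, fun N q hN hq hconv => ?_⟩
  have hQ : 0 < ∑ i, q i := Finset.sum_pos (fun i _ => hq i) ⟨⟨0, hN⟩, Finset.mem_univ _⟩
  exact not_convexOn_neg_offloadingProb ha.le hb hα <| ConvexOn.of_weighted_sum_diagonal hQ <|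
    hconv.congr fun P _ => by simp only [offloadingProb, mul_neg, ← Finset.sum_neg_distrib]

/-- The per-content objective `f(u,h) = −(1 − (1 − α·u)·exp(−(a·u + b·h)))` is NOT
convex on `[0,1]²`, and hence the two-tier objective `F(P) = −Σ_i q_i P_{i,off}`
is non-convex on `[0,1]^{2N}` (for positive weights and at least one content). -/
theorem objective_not_convex (a b α : ℝ) (ha : 0 < a) (hb : 0 < b) (hα : 0 < α) (hα1 : α ≤ 1) :
    ¬ ConvexOn ℝ (Set.Icc (0:ℝ) 1 ×ˢ Set.Icc (0:ℝ) 1)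
      (fun p : ℝ × ℝ => -(1 - (1 - α * p.1) * Real.exp (-(a * p.1 + b * p.2)))) ∧
    ∀ (N : ℕ) (q : Fin N → ℝ), 0 < N → (∀ i, 0 < q i) →
      ¬ ConvexOn ℝ {P : (Fin N → ℝ) × (Fin N → ℝ) |
          ∀ i, P.1 i ∈ Set.Icc (0:ℝ) 1 ∧ P.2 i ∈ Set.Icc (0:ℝ) 1}
        (fun P => -∑ i, q i *
          (1 - (1 - α * P.1 i) * Real.exp (-(a * P.1 i + b * P.2 i)))) :=
  objective_not_convex_general a b α ha hb hα
end

section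
/- (Lemma 1, water-filling optimality.) Let c > 0, let q_1,…,q_N be positive weights, and let 0 < M_H ≤ N. Suppose β ∈ ℝ is such that the point p* with coordinates p*_i = min( max( β + (ln q_i)/c , 0 ), 1 ) satisfies Σ_{i=1}^N p*_i = M_H. Then p* maximizes Σ_{i=1}^N q_i·(1 − exp(−c·p_i)) over the feasible set { p ∈ ℝ^N : 0 ≤ p_i ≤ 1 for all i, Σ_i p_i ≤ M_H }. -/
/-- Lemma 1 (water-filling optimality): if the water level `β` makes
`p*_i = min(max(β + ln q_i / c, 0), 1)` sum to `M_H`, then `p*` maximizes the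
helper-tier offloading probability `Σ_i q_i·(1 − exp(−c·p_i))` over the feasible
set `{p : 0 ≤ p_i ≤ 1, Σ_i p_i ≤ M_H}`. -/
theorem waterfilling_optimal (N : ℕ) (c : ℝ) (q : Fin N → ℝ) (MH β : ℝ)
    (hc : 0 < c) (hq : ∀ i, 0 < q i) (hM0 : 0 < MH) (hMN : MH ≤ N)
    (pstar : Fin N → ℝ)
    (hpstar : ∀ i, pstar i = min (max (β + Real.log (q i) / c) 0) 1)
    (hsum : ∑ i, pstar i = MH) :
    ∀ p : Fin N → ℝ, (∀ i, 0 ≤ p i ∧ p i ≤ 1) → ∑ i, p i ≤ MH →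
      ∑ i, q i * (1 - Real.exp (-(c * p i))) ≤
        ∑ i, q i * (1 - Real.exp (-(c * pstar i))) := by
  intro p hp hpsum
  set μ := c * Real.exp (-(c * β)) with hμ
  have hμ0 : 0 ≤ μ := by positivity
  have key : ∀ i ∈ Finset.univ, q i * (1 - Real.exp (-(c * p i))) ≤
      q i * (1 - Real.exp (-(c * pstar i))) + μ * (p i - pstar i) := by
    intro i _
    obtain ⟨hp0, hp1⟩ := hp i
    have hqi := hq i
    set t := β + Real.log (q i) / c with ht
    have hqexp : q i = Real.exp (c * (t - β)) := by
      have : c * (t - β) = Real.log (q i) := by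
        rw [ht]; field_simp; ring
      rw [this, Real.exp_log hqi]
    -- concavity (first-order upper bound)
    have hgrad : q i * (1 - Real.exp (-(c * p i))) ≤
        q i * (1 - Real.exp (-(c * pstar i)))
          + c * q i * Real.exp (-(c * pstar i)) * (p i - pstar i) := by
      have h1 : -(c * (p i - pstar i)) + 1 ≤ Real.exp (-(c * (p i - pstar i))) :=
        Real.add_one_le_exp _
      have hE : Real.exp (-(c * p i)) =
          Real.exp (-(c * pstar i)) * Real.exp (-(c * (p i - pstar i))) := by
        rw [← Real.exp_add]; ring_nf
      have hEpos : 0 < Real.exp (-(c * pstar i)) := Real.exp_pos _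
      nlinarith [mul_le_mul_of_nonneg_left h1 (le_of_lt (mul_pos hqi hEpos))]
    -- slope comparison with the multiplier μ
    have hslope : c * q i * Real.exp (-(c * pstar i)) * (p i - pstar i)
        ≤ μ * (p i - pstar i) := by
      rcases le_total t 0 with h0 | h0
      · -- pstar i = 0, slope ≤ μ, p i - pstar i ≥ 0
        have hps : pstar i = 0 := by
          rw [hpstar i, ← ht, max_eq_right h0, min_eq_left zero_le_one]
        have hle : c * q i * Real.exp (-(c * pstar i)) ≤ μ := by
          rw [hps, hqexp, hμ, mul_assoc, ← Real.exp_add]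
          gcongr
          nlinarith [mul_nonpos_of_nonneg_of_nonpos hc.le h0]
        have hnn : 0 ≤ p i - pstar i := by rw [hps]; linarith
        exact mul_le_mul_of_nonneg_right hle hnn
      · rcases le_total 1 t with h1 | h1
        · -- pstar i = 1, slope ≥ μ, p i - pstar i ≤ 0
          have hps : pstar i = 1 := by
            rw [hpstar i, ← ht, max_eq_left h0, min_eq_right h1]
          have hge : μ ≤ c * q i * Real.exp (-(c * pstar i)) := by
            rw [hps, hqexp, hμ, mul_assoc, ← Real.exp_add]
            gcongr
            nlinarith [mul_nonneg hc.le (by linarith : (0:ℝ) ≤ t - 1)]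
          have hnp : p i - pstar i ≤ 0 := by rw [hps]; linarith
          exact mul_le_mul_of_nonpos_right hge hnp
        · -- pstar i = t, slope = μ
          have hps : pstar i = t := by
            rw [hpstar i, ← ht, max_eq_left h0, min_eq_left h1]
          have heq : c * q i * Real.exp (-(c * pstar i)) = μ := by
            rw [hps, hqexp, hμ, mul_assoc, ← Real.exp_add]
            have h2 : c * (t - β) + -(c * t) = -(c * β) := by ring
            rw [h2]
          rw [heq]
    linarith
  have hsum' : ∑ i, (q i * (1 - Real.exp (-(c * pstar i))) + μ * (p i - pstar i))
      = ∑ i, q i * (1 - Real.exp (-(c * pstar i)))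
        + μ * (∑ i, p i - ∑ i, pstar i) := by
    rw [Finset.sum_add_distrib, ← Finset.mul_sum, Finset.sum_sub_distrib]
  have hμterm : μ * (∑ i, p i - ∑ i, pstar i) ≤ 0 := by
    apply mul_nonpos_of_nonneg_of_nonpos hμ0
    rw [hsum]; linarith
  calc ∑ i, q i * (1 - Real.exp (-(c * p i)))
      ≤ ∑ i, (q i * (1 - Real.exp (-(c * pstar i))) + μ * (p i - pstar i)) :=
        Finset.sum_le_sum key
    _ ≤ ∑ i, q i * (1 - Real.exp (-(c * pstar i))) := by rw [hsum']; linarith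
end

section
/- (Remark 1, low-density regime.) Let q_1 > q_2 > … > q_N > 0, let 1 ≤ M < N be an integer, and let c > 0 satisfy c ≤ ln(q_M / q_{M+1}). Then the 'popular cache' placement p* given by p*_i = 1 for i ≤ M and p*_i = 0 for i > M maximizes Σ_{i=1}^N q_i·(1 − exp(−c·p_i)) over { p ∈ ℝ^N : 0 ≤ p_i ≤ 1, Σ_i p_i ≤ M }. In particular, for sufficiently small helper density λ_H (i.e., sufficiently small c = πλ_H R_H²) the helpers optimally cache the M most popular contents. -/
/-- Remark 1, low-density regime: if the popularities are strictly decreasing and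
`c ≤ ln(q_M / q_{M+1})` (small helper density), then the 'popular cache'
placement — cache the `M` most popular contents with probability 1 — maximizes
`Σ_i q_i·(1 − exp(−c·p_i))` over `{p : 0 ≤ p_i ≤ 1, Σ_i p_i ≤ M}`. -/
theorem popular_cache_optimal_low_density (N : ℕ) (q : Fin N → ℝ) (M : ℕ) (c : ℝ)
    (hq : StrictAnti q) (hqpos : ∀ i, 0 < q i)
    (hM1 : 1 ≤ M) (hMN : M < N) (hc : 0 < c)
    (hsmall : c ≤ Real.log (q ⟨M - 1, by omega⟩ / q ⟨M, by omega⟩)) :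
    ∀ p : Fin N → ℝ, (∀ i, 0 ≤ p i ∧ p i ≤ 1) → ∑ i, p i ≤ (M : ℝ) →
      ∑ i, q i * (1 - Real.exp (-(c * p i))) ≤
        ∑ i, q i * (1 - Real.exp (-(c * (if (i : ℕ) < M then (1:ℝ) else 0)))) := by
  intro p hp hsum
  set qM : ℝ := q ⟨M, by omega⟩ with hqMdef
  set qM1 : ℝ := q ⟨M - 1, by omega⟩ with hqM1def
  have hqMpos : 0 < qM := hqpos _
  have hqM1pos : 0 < qM1 := hqpos _
  set μ : ℝ := c * qM with hμdef
  have hμpos : 0 ≤ μ := le_of_lt (mul_pos hc hqMpos)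
  -- from hsmall : qM * exp c ≤ qM1
  have hratio : Real.exp c ≤ qM1 / qM := by
    calc Real.exp c ≤ Real.exp (Real.log (qM1 / qM)) := Real.exp_le_exp.mpr hsmall
    _ = qM1 / qM := Real.exp_log (div_pos hqM1pos hqMpos)
  have hkey2 : qM ≤ qM1 * Real.exp (-c) := by
    have h1 : qM * Real.exp c ≤ qM1 := by have h := (le_div_iff₀ hqMpos).mp hratio; linarith [mul_comm (Real.exp c) qM ▸ h]
    have h2 := Real.exp_pos c
    rw [Real.exp_neg]
    calc qM = qM * Real.exp c * (Real.exp c)⁻¹ := by field_simp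
    _ ≤ qM1 * (Real.exp c)⁻¹ := by gcongr
  -- pointwise Lagrangian bound
  have hkey : ∀ i : Fin N,
      q i * (1 - Real.exp (-(c * p i))) - μ * p i ≤
      q i * (1 - Real.exp (-(c * (if (i : ℕ) < M then (1:ℝ) else 0)))) -
        μ * (if (i : ℕ) < M then (1:ℝ) else 0) := by
    intro i
    obtain ⟨hp0, hp1⟩ := hp i
    by_cases hi : (i : ℕ) < M
    · simp only [hi, if_pos, mul_one]
      -- need : q i * (1 - e^{-c p}) - μ p ≤ q i * (1 - e^{-c}) - μ
      have hqi : qM1 ≤ q i := by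
        rcases eq_or_lt_of_le (Nat.le_pred_of_lt hi) with h | h
        · have : i = (⟨M - 1, by omega⟩ : Fin N) := by
            apply Fin.ext; simpa using h
          rw [this]
        · exact le_of_lt (hq (by rwa [Fin.lt_def]))
      -- tangent line of e^{-cp} at p = 1
      have htan : Real.exp (-c) * (1 + c * (1 - p i)) ≤ Real.exp (-(c * p i)) := by
        have h := Real.add_one_le_exp (c * (1 - p i))
        have : Real.exp (-(c * p i)) = Real.exp (-c) * Real.exp (c * (1 - p i)) := by
          rw [← Real.exp_add]; ring_nf
        rw [this]
        nlinarith [Real.exp_pos (-c)]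
      -- q i * e^{-c} ≥ qM1 * e^{-c} ≥ qM
      have hq2 : qM ≤ q i * Real.exp (-c) := by
        calc qM ≤ qM1 * Real.exp (-c) := hkey2
        _ ≤ q i * Real.exp (-c) := by
          have := Real.exp_pos (-c); nlinarith
      have h1p : 0 ≤ 1 - p i := by linarith
      nlinarith [mul_le_mul_of_nonneg_left htan (le_of_lt (hqpos i)),
        mul_le_mul_of_nonneg_right hq2 (mul_nonneg (le_of_lt hc) h1p)]
    · simp only [hi, if_neg, not_false_iff, mul_zero, neg_zero, Real.exp_zero]
      -- need : q i * (1 - e^{-c p}) - μ p ≤ 0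
      have hqi : q i ≤ qM := by
        rcases eq_or_lt_of_le (Nat.le_of_not_lt hi) with h | h
        · have : i = (⟨M, by omega⟩ : Fin N) := by
            apply Fin.ext; simpa using h.symm
          rw [this]
        · exact le_of_lt (hq (by rwa [Fin.lt_def]))
      have hlin : 1 - Real.exp (-(c * p i)) ≤ c * p i := by
        have := Real.add_one_le_exp (-(c * p i))
        linarith
      have hcp : 0 ≤ c * p i := mul_nonneg (le_of_lt hc) hp0
      nlinarith [mul_le_mul_of_nonneg_left hlin (le_of_lt (hqpos i)),
        mul_le_mul_of_nonneg_right hqi hcp]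
  -- sum of the indicator is M
  have hind : ∑ i : Fin N, (if (i : ℕ) < M then (1:ℝ) else 0) = (M : ℝ) := by
    rw [Finset.sum_boole]
    norm_cast
    have : Finset.filter (fun x : Fin N => ↑x < M) Finset.univ =
        Finset.Iio ⟨M, by omega⟩ := by
      ext x; simp [Fin.lt_def]
    rw [this, Fin.card_Iio]
  -- combine
  have hS := Finset.sum_le_sum (fun i (_ : i ∈ Finset.univ) => hkey i)
  rw [Finset.sum_sub_distrib, Finset.sum_sub_distrib, ← Finset.mul_sum,
    ← Finset.mul_sum, hind] at hS
  have hμsum : μ * (∑ i, p i) ≤ μ * (M : ℝ) := mul_le_mul_of_nonneg_left hsum hμpos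
  linarith
end

section
/- (Remark 1, high-density regime.) Let q_1,…,q_N > 0 and let 0 < M < N. For c > 0 define p_i(c) = M/N + ( ln q_i − (1/N)·Σ_{j=1}^N ln q_j ) / c. Then Σ_{i=1}^N p_i(c) = M for every c > 0; there exists c_0 > 0 such that for all c ≥ c_0 every coordinate satisfies 0 < p_i(c) < 1 and the point p(c) maximizes Σ_{i=1}^N q_i·(1 − exp(−c·p_i)) over { p ∈ [0,1]^N : Σ_i p_i ≤ M }; and p_i(c) → M/N as c → ∞ for every i. In particular, for high helper density the optimal placement tends to caching all contents evenly with probability M/N. -/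
/-!
The objective `∑ qᵢ (1 - exp (-c pᵢ))` is concave, so a feasible point at which all marginal
gains `c qᵢ exp (-c pᵢ)` are equal and the budget `∑ pᵢ = M` is exhausted is a global maximum:
every summand lies below its tangent line, and the tangent terms add up to a multiple of
`∑ yᵢ - M ≤ 0`. The choice `pᵢ = M/N + (ln qᵢ - mean ln q)/c` makes `qᵢ exp (-c pᵢ)` independent
of `i`. The centered logarithms sum to zero, so the budget is met, and their contribution decays
like `1/c`, which gives the limit `M/N ∈ (0,1)` and hence feasibility for large `c`.
-/

open Filter Topology Real

lemma one_sub_exp_neg_le_tangent (a b : ℝ) :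
    1 - exp (-a) ≤ 1 - exp (-b) + exp (-b) * (a - b) := by
  have h := mul_le_mul_of_nonneg_right (add_one_le_exp (b - a)) (exp_nonneg (-b))
  rw [← exp_add, show b - a + -b = -a by ring] at h
  linarith

section

variable {ι : Type*} [Fintype ι]

lemma sum_sub_mean_eq_zero (f : ι → ℝ) :
    ∑ i, (f i - (1 / Fintype.card ι) * ∑ j, f j) = 0 := by
  rcases isEmpty_or_nonempty ι with _ | _
  · simp
  · have hcard : (Fintype.card ι : ℝ) ≠ 0 := by positivity
    simp only [Finset.sum_sub_distrib, Finset.sum_const, Finset.card_univ, nsmul_eq_mul]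
    field_simp
    ring

lemma sum_mul_one_sub_exp_le_of_marginal_eq {q x y : ι → ℝ} {c K : ℝ} (hq : ∀ i, 0 ≤ q i)
    (hc : 0 ≤ c) (hK0 : 0 ≤ K) (hK : ∀ i, q i * exp (-(c * x i)) = K)
    (hxy : ∑ i, y i ≤ ∑ i, x i) :
    ∑ i, q i * (1 - exp (-(c * y i))) ≤ ∑ i, q i * (1 - exp (-(c * x i))) := by
  have htangent : ∀ i, q i * (1 - exp (-(c * y i))) ≤
      q i * (1 - exp (-(c * x i))) + c * K * (y i - x i) := fun i =>
    calc q i * (1 - exp (-(c * y i)))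
        ≤ q i * (1 - exp (-(c * x i)) + exp (-(c * x i)) * (c * y i - c * x i)) :=
          mul_le_mul_of_nonneg_left (one_sub_exp_neg_le_tangent _ _) (hq i)
      _ = q i * (1 - exp (-(c * x i))) + c * K * (y i - x i) := by rw [← hK i]; ring
  calc ∑ i, q i * (1 - exp (-(c * y i)))
      ≤ ∑ i, (q i * (1 - exp (-(c * x i))) + c * K * (y i - x i)) :=
        Finset.sum_le_sum fun i _ => htangent i
    _ = ∑ i, q i * (1 - exp (-(c * x i))) + c * K * (∑ i, y i - ∑ i, x i) := by
        rw [Finset.sum_add_distrib, ← Finset.mul_sum, Finset.sum_sub_distrib]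
    _ ≤ ∑ i, q i * (1 - exp (-(c * x i))) := by
        have : c * K * (∑ i, y i - ∑ i, x i) ≤ 0 :=
          mul_nonpos_of_nonneg_of_nonpos (by positivity) (by linarith)
        linarith

end

lemma mul_exp_neg_mul_add_log_sub_div {q c : ℝ} (hq : 0 < q) (hc : c ≠ 0) (m a : ℝ) :
    q * exp (-(c * (m + (log q - a) / c))) = exp (a - c * m) := by
  rw [mul_add, mul_div_cancel₀ _ hc, show -(c * m + (log q - a)) = a - c * m - log q by ring,
    exp_sub, exp_log hq, mul_div_cancel₀ _ hq.ne']

lemma tendsto_const_add_div_atTop (m d : ℝ) :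
    Tendsto (fun c : ℝ => m + d / c) atTop (𝓝 m) := by
  simpa using (tendsto_const_nhds (x := m)).add (tendsto_const_nhds.div_atTop tendsto_id)

/-- Remark 1, high-density regime: for
`p_i(c) = M/N + (ln q_i − (1/N)·Σ_j ln q_j)/c` one has `Σ_i p_i(c) = M` for all
`c > 0`; for all sufficiently large `c` every coordinate lies in `(0,1)` and
`p(c)` maximizes `Σ_i q_i·(1 − exp(−c·p_i))` over `{p ∈ [0,1]^N : Σ_i p_i ≤ M}`;
and `p_i(c) → M/N` as `c → ∞`, i.e. the optimal placement tends to the even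
placement. -/
theorem even_cache_high_density (N : ℕ) (q : Fin N → ℝ) (M : ℝ)
    (hq : ∀ i, 0 < q i) (hM0 : 0 < M) (hMN : M < N)
    (p : ℝ → Fin N → ℝ)
    (hp : ∀ c i, p c i =
      M / N + (Real.log (q i) - (1 / N) * ∑ j, Real.log (q j)) / c) :
    (∀ c : ℝ, 0 < c → ∑ i, p c i = M) ∧
    (∃ c₀ : ℝ, 0 < c₀ ∧ ∀ c : ℝ, c₀ ≤ c →
      (∀ i, 0 < p c i ∧ p c i < 1) ∧
      ∀ y : Fin N → ℝ, (∀ i, y i ∈ Set.Icc (0:ℝ) 1) → ∑ i, y i ≤ M →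
        ∑ i, q i * (1 - Real.exp (-(c * y i))) ≤
          ∑ i, q i * (1 - Real.exp (-(c * p c i)))) ∧
    (∀ i, Filter.Tendsto (fun c => p c i) Filter.atTop (nhds (M / N))) := by
  have hN : (0 : ℝ) < N := hM0.trans hMN
  set avg := (1 / (N : ℝ)) * ∑ j, log (q j)
  have hsum (c : ℝ) (hc : 0 < c) : ∑ i, p c i = M := by
    have hcentered : ∑ i, (log (q i) - avg) = 0 := by
      simpa only [Fintype.card_fin] using sum_sub_mean_eq_zero (fun i => log (q i))
    simp only [hp, Finset.sum_add_distrib, ← Finset.sum_div, hcentered, zero_div, add_zero,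
      Finset.sum_const, Finset.card_univ, Fintype.card_fin, nsmul_eq_mul]
    field_simp
  have hlim (i : Fin N) : Tendsto (fun c => p c i) atTop (𝓝 (M / N)) := by
    simpa only [hp] using tendsto_const_add_div_atTop (M / N) (log (q i) - avg)
  have hfeasible : ∀ᶠ c in atTop, ∀ i, p c i ∈ Set.Ioo 0 1 := eventually_all.2 fun i =>
    (hlim i).eventually (Ioo_mem_nhds (div_pos hM0 hN) ((div_lt_one hN).2 hMN))
  obtain ⟨c₁, hc₁⟩ := eventually_atTop.1 hfeasible
  refine ⟨hsum, ⟨max c₁ 1, by positivity, fun c hc₀ =>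
    ⟨fun i => hc₁ c (le_of_max_le_left hc₀) i, fun y _ hy => ?_⟩⟩, hlim⟩
  have hc : 0 < c := zero_lt_one.trans_le (le_of_max_le_right hc₀)
  refine sum_mul_one_sub_exp_le_of_marginal_eq (fun i => (hq i).le) hc.le
    (exp_nonneg (avg - c * (M / N))) (fun i => ?_) (by rwa [hsum c hc])
  rw [hp]
  exact mul_exp_neg_mul_add_log_sub_div (hq i) hc.ne' _ _
end
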